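/- arXiv:2201.12752 — 10 statements merged into one kernel-verified Lean document; each statement's English description precedes it below -/
import Mathlib

section
/- Suppose D and Z are {0,1}-valued random variables, the family of all potential variables (M_{d,z})_{d,z∈{0,1}} and (Y_{d,m})_{d,m∈{0,1}} is independent of the pair (D,Z), P(D=1, Z=z) > 0 for z = 0,1, the observed mediator is M = M_{D,Z} and the observed outcome is Y = Y_{D,M}. Then E[M | D=1, Z=1] − E[M | D=1, Z=0] = E[M_{1,1} − M_{1,0}] and E[Y | D=1, Z=1] − E[Y | D=1, Z=0] = E[Y_{1,M_{1,1}} − Y_{1,M_{1,0}}]; consequently, if E[M_{1,1} − M_{1,0}] ≠ 0, the Wald ratio (E[Y|D=1,Z=1] − E[Y|D=1,Z=0]) / (E[M|D=1,Z=1] − E[M|D=1,Z=0]) equals E[Y_{1,M_{1,1}} − Y_{1,M_{1,0}}] / E[M_{1,1} − M_{1,0}]. -/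
open MeasureTheory ProbabilityTheory

/-- Conditional mean `E[W | A] = E[W·1_A] / P(A)` (set integral divided by probability). -/
noncomputable def condMean {Ω : Type*} [MeasurableSpace Ω] (P : Measure Ω)
    (W : Ω → ℝ) (A : Set Ω) : ℝ :=
  (∫ ω in A, W ω ∂P) / (P A).toReal

/-- A `{0,1}`-valued (Bool-coded) random variable, viewed as a real number. -/
noncomputable def bR (b : Bool) : ℝ := if b then 1 else 0

/-! On the event `{D = 1, Z = z}` the observed variables coincide with the potential ones
`M_{1,z}` and `Y_{1,M_{1,z}}`. Both are measurable for the σ-algebra generated by the potential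
variables, which is independent of the event, so their conditional means are plain means. -/

section

variable {Ω β : Type*}

theorem apply_bool_eq_piecewise (f : Bool → Ω → β) (N : Ω → Bool) :
    (fun ω => f (N ω) ω) = {ω | N ω = true}.piecewise (f true) (f false) := by
  funext ω
  cases h : N ω <;> simp [Set.piecewise, h]

theorem Measurable.apply_bool {m : MeasurableSpace Ω} [MeasurableSpace β] {f : Bool → Ω → β}
    (hf : ∀ b, Measurable[m] (f b)) {N : Ω → Bool} (hN : Measurable[m] N) :
    Measurable[m] fun ω => f (N ω) ω := by
  rw [apply_bool_eq_piecewise]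
  exact (hf true).piecewise (hN (measurableSet_singleton true)) (hf false)

theorem Integrable.apply_bool {E : Type*} [NormedAddCommGroup E] [MeasurableSpace Ω]
    {P : Measure Ω} {f : Bool → Ω → E}
    (hf : ∀ b, Integrable (f b) P) {N : Ω → Bool} (hN : Measurable N) :
    Integrable (fun ω => f (N ω) ω) P := by
  rw [apply_bool_eq_piecewise]
  exact Integrable.piecewise (hN (measurableSet_singleton true)) (hf true).integrableOn
    (hf false).integrableOn

end

section

variable {Ω : Type*} {m m₁ m₂ mΩ : MeasurableSpace Ω} {P : Measure Ω}

theorem condMean_congr {W W' : Ω → ℝ} {A : Set Ω} (hA : MeasurableSet A) (h : Set.EqOn W W' A) :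
    condMean P W A = condMean P W' A := by
  unfold condMean
  rw [setIntegral_congr_fun hA h]

theorem condMean_eq_integral_of_indep [IsProbabilityMeasure P]
    (hInd : Indep m₁ m₂ P) {W : Ω → ℝ} (hWm : Measurable[m₁] W) (hWint : Integrable W P)
    {A : Set Ω} (hA₂ : MeasurableSet[m₂] A) (hA : MeasurableSet A) (hPA : P A ≠ 0) :
    condMean P W A = ∫ ω, W ω ∂P := by
  have hindep : IndepFun (A.indicator fun _ => (1 : ℝ)) W P :=
    (indep_of_indep_of_le_right hInd.symm hWm.comap_le).indicator_indepFun 1 hA₂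
  have hsetIntegral : ∫ ω in A, W ω ∂P = P.real A * ∫ ω, W ω ∂P := by
    calc ∫ ω in A, W ω ∂P = ∫ ω, A.indicator (fun _ => (1 : ℝ)) ω * W ω ∂P := by
          rw [← integral_indicator hA]
          congr with ω
          by_cases hω : ω ∈ A <;> simp [hω]
      _ = P.real A * ∫ ω, W ω ∂P := by
          rw [hindep.integral_fun_mul_eq_mul_integral
            ((integrable_const (1 : ℝ)).indicator hA).aestronglyMeasurable hWint.aestronglyMeasurable]
          exact congrArg (· * _) (integral_indicator_one hA)
  have hPA_pos : 0 < P.real A := ENNReal.toReal_pos hPA (measure_ne_top P A)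
  rw [condMean, hsetIntegral, ← measureReal_def, mul_div_cancel_left₀ _ hPA_pos.ne']

theorem condMean_apply_eq_integral_of_indep [IsProbabilityMeasure P] {α : Type*}
    [MeasurableSpace α] [MeasurableSingletonClass α] {T : Ω → α}
    (hT : Measurable T) (hInd : Indep m (MeasurableSpace.comap T inferInstance) P)
    {W : α → Ω → ℝ} {t : α} (hWm : Measurable[m] (W t)) (hWint : Integrable (W t) P)
    (hPt : P (T ⁻¹' {t}) ≠ 0) :
    condMean P (fun ω => W (T ω) ω) (T ⁻¹' {t}) = ∫ ω, W t ω ∂P := by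
  have hTt : MeasurableSet (T ⁻¹' {t}) := hT (measurableSet_singleton t)
  rw [condMean_congr hTt fun ω (hω : T ω = t) => by rw [hω]]
  exact condMean_eq_integral_of_indep hInd hWm hWint ⟨{t}, measurableSet_singleton t, rfl⟩ hTt hPt

theorem condMean_treated_sub_eq_integral_sub [IsProbabilityMeasure P]
    {D Z : Ω → Bool} (hD : Measurable D) (hZ : Measurable Z)
    (hInd : Indep m (MeasurableSpace.comap (fun ω => (D ω, Z ω)) inferInstance) P)
    (hpos : ∀ z : Bool, P {ω | D ω = true ∧ Z ω = z} ≠ 0)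
    {W : Bool → Bool → Ω → ℝ} (hWm : ∀ z, Measurable[m] (W true z))
    (hWint : ∀ z, Integrable (W true z) P) :
    condMean P (fun ω => W (D ω) (Z ω) ω) {ω | D ω = true ∧ Z ω = true}
        - condMean P (fun ω => W (D ω) (Z ω) ω) {ω | D ω = true ∧ Z ω = false}
      = ∫ ω, (W true true ω - W true false ω) ∂P := by
  have hevent : ∀ z : Bool,
      {ω | D ω = true ∧ Z ω = z} = (fun ω => (D ω, Z ω)) ⁻¹' {(true, z)} := fun z => by
    ext ω
    simp
  have harm : ∀ z : Bool,
      condMean P (fun ω => W (D ω) (Z ω) ω) {ω | D ω = true ∧ Z ω = z} = ∫ ω, W true z ω ∂P := by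
    intro z
    have hPz := hpos z
    rw [hevent] at hPz ⊢
    exact condMean_apply_eq_integral_of_indep (W := fun dz => W dz.1 dz.2) (hD.prodMk hZ) hInd
      (hWm z) (hWint z) hPz
  rw [harm, harm, integral_sub (hWint true) (hWint false)]

end

/-- with all potential mediators and potential outcomes jointly independent
of `(D, Z)` and `P(D=1, Z=z) > 0`, the conditional-mean contrasts of the observed mediator
`M = M_{D,Z}` and observed outcome `Y = Y_{D,M}` across instrument arms within the treated
group identify `E[M_{1,1} - M_{1,0}]` and `E[Y_{1,M_{1,1}} - Y_{1,M_{1,0}}]`, and hence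
the Wald ratio identifies their ratio. -/
theorem stmt_1 {Ω : Type*} [MeasurableSpace Ω] (P : Measure Ω) [IsProbabilityMeasure P]
    (D Z : Ω → Bool) (M : Bool → Bool → Ω → Bool) (Ypo : Bool → Bool → Ω → ℝ)
    (hD : Measurable D) (hZ : Measurable Z) (hM : ∀ d z, Measurable (M d z))
    (hYint : ∀ d m, Integrable (Ypo d m) P)
    (hIndep : Indep
      ((⨆ (d : Bool) (z : Bool), MeasurableSpace.comap (M d z) inferInstance)
        ⊔ (⨆ (d : Bool) (m : Bool), MeasurableSpace.comap (Ypo d m) inferInstance))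
      (MeasurableSpace.comap (fun ω => (D ω, Z ω)) inferInstance) P)
    (hpos : ∀ z : Bool, 0 < (P {ω | D ω = true ∧ Z ω = z}).toReal) :
    (condMean P (fun ω => bR (M (D ω) (Z ω) ω)) {ω | D ω = true ∧ Z ω = true}
        - condMean P (fun ω => bR (M (D ω) (Z ω) ω)) {ω | D ω = true ∧ Z ω = false}
      = ∫ ω, (bR (M true true ω) - bR (M true false ω)) ∂P)
    ∧ (condMean P (fun ω => Ypo (D ω) (M (D ω) (Z ω) ω) ω) {ω | D ω = true ∧ Z ω = true}
        - condMean P (fun ω => Ypo (D ω) (M (D ω) (Z ω) ω) ω) {ω | D ω = true ∧ Z ω = false}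
      = ∫ ω, (Ypo true (M true true ω) ω - Ypo true (M true false ω) ω) ∂P)
    ∧ ((∫ ω, (bR (M true true ω) - bR (M true false ω)) ∂P) ≠ 0 →
      (condMean P (fun ω => Ypo (D ω) (M (D ω) (Z ω) ω) ω) {ω | D ω = true ∧ Z ω = true}
          - condMean P (fun ω => Ypo (D ω) (M (D ω) (Z ω) ω) ω) {ω | D ω = true ∧ Z ω = false})
        / (condMean P (fun ω => bR (M (D ω) (Z ω) ω)) {ω | D ω = true ∧ Z ω = true}
          - condMean P (fun ω => bR (M (D ω) (Z ω) ω)) {ω | D ω = true ∧ Z ω = false})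
      = (∫ ω, (Ypo true (M true true ω) ω - Ypo true (M true false ω) ω) ∂P)
        / (∫ ω, (bR (M true true ω) - bR (M true false ω)) ∂P)) := by
  have hM_pot : ∀ d z, Measurable[(⨆ (d : Bool) (z : Bool),
      MeasurableSpace.comap (M d z) inferInstance)
        ⊔ (⨆ (d : Bool) (m : Bool), MeasurableSpace.comap (Ypo d m) inferInstance)] (M d z) :=
    fun d z => Measurable.of_comap_le (le_sup_of_le_left
      (le_iSup₂ (f := fun d z => MeasurableSpace.comap (M d z) inferInstance) d z))
  have hY_pot : ∀ d m, Measurable[(⨆ (d : Bool) (z : Bool),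
      MeasurableSpace.comap (M d z) inferInstance)
        ⊔ (⨆ (d : Bool) (m : Bool), MeasurableSpace.comap (Ypo d m) inferInstance)] (Ypo d m) :=
    fun d m => Measurable.of_comap_le (le_sup_of_le_right
      (le_iSup₂ (f := fun d m => MeasurableSpace.comap (Ypo d m) inferInstance) d m))
  have hpos_ne : ∀ z : Bool, P {ω | D ω = true ∧ Z ω = z} ≠ 0 :=
    fun z => (ENNReal.toReal_pos_iff.mp (hpos z)).1.ne'
  have hmediator := condMean_treated_sub_eq_integral_sub hD hZ hIndep hpos_ne
    (W := fun d z ω => bR (M d z ω))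
    (fun z => Measurable.apply_bool (fun b => measurable_const) (hM_pot true z))
    (fun z => Integrable.apply_bool (fun b => integrable_const (bR b)) (hM true z))
  have houtcome := condMean_treated_sub_eq_integral_sub hD hZ hIndep hpos_ne
    (W := fun d z ω => Ypo d (M d z ω) ω)
    (fun z => Measurable.apply_bool (hY_pot true) (hM_pot true z))
    (fun z => Integrable.apply_bool (hYint true) (hM true z))
  exact ⟨hmediator, houtcome, fun _ => by rw [hmediator, houtcome]⟩
end

section
/- Suppose D and Z are {0,1}-valued random variables, the family of all potential variables (M_{d,z})_{d,z∈{0,1}} and (Y_{d,m})_{d,m∈{0,1}} is independent of the pair (D,Z), P(D=0, Z=z) > 0 for z = 0,1, the observed mediator is M = M_{D,Z} and the observed outcome is Y = Y_{D,M}. Then E[M | D=0, Z=1] − E[M | D=0, Z=0] = E[M_{0,1} − M_{0,0}] and E[Y | D=0, Z=1] − E[Y | D=0, Z=0] = E[Y_{0,M_{0,1}} − Y_{0,M_{0,0}}]; consequently, if E[M_{0,1} − M_{0,0}] ≠ 0, the Wald ratio (E[Y|D=0,Z=1] − E[Y|D=0,Z=0]) / (E[M|D=0,Z=1] − E[M|D=0,Z=0])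 equals E[Y_{0,M_{0,1}} − Y_{0,M_{0,0}}] / E[M_{0,1} − M_{0,0}]. -/
open MeasureTheory ProbabilityTheory

/-!
On the event `{D = 0, Z = z}` the observed variables coincide with the potential ones
`M_{0,z}` and `Y_{0,M_{0,z}}`, which are functions of the potential family and hence independent
of the event. Averaging over the event therefore returns their unconditional means.
-/

section BoolSelect

variable {Ω β : Type*} {N : Ω → Bool}

lemma measurable_bool_select {m : MeasurableSpace Ω} [MeasurableSpace β] {X : Bool → Ω → β}
    (hN : Measurable N) (hX : ∀ b, Measurable (X b)) :
    Measurable fun ω => X (N ω) ω :=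
  (measurable_from_prod_countable_left (f := fun p : Ω × Bool => X p.2 p.1) hX).comp
    (measurable_id.prodMk hN)

lemma integrable_bool_select [MeasurableSpace Ω] {P : Measure Ω} {X : Bool → Ω → ℝ}
    (hN : Measurable N) (hX : ∀ b, Integrable (X b) P) :
    Integrable (fun ω => X (N ω) ω) P := by
  have hsel : (fun ω => X (N ω) ω) = {ω | N ω = true}.piecewise (X true) (X false) := by
    funext ω
    by_cases h : N ω = true <;> simp [Set.piecewise, h]
  rw [hsel]
  exact Integrable.piecewise (hN (measurableSet_singleton true)) (hX true).integrableOn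
    (hX false).integrableOn

end BoolSelect

lemma condMean_eq_integral_of_indep_s3 {Ω : Type*} {G m mΩ : MeasurableSpace Ω}
    {P : Measure Ω} (hIndep : Indep G m P) (hm : m ≤ mΩ) {X W : Ω → ℝ} {A : Set Ω}
    (hXG : Measurable[G] X) (hX : AEMeasurable X P) (hA : MeasurableSet[m] A)
    (hPA : P.real A ≠ 0) (hW : ∀ ω ∈ A, W ω = X ω) :
    condMean P W A = ∫ ω, X ω ∂P := by
  have hXm : Indep m (MeasurableSpace.comap X inferInstance) P :=
    indep_of_indep_of_le_right hIndep.symm hXG.comap_le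
  have hmul : ∫ ω in A, X ω ∂P = P.real A * ∫ ω, X ω ∂P :=
    hXm.setIntegral_eq_mul (f := id) hm hX hA measurable_id.aestronglyMeasurable
  rw [condMean, setIntegral_congr_fun (hm A hA) hW, hmul]
  exact mul_div_cancel_left₀ _ hPA

section PotentialSigma

variable {Ω : Type*} (M : Bool → Bool → Ω → Bool) (Ypo : Bool → Bool → Ω → ℝ)

abbrev potentialSigma : MeasurableSpace Ω :=
  (⨆ (d : Bool) (z : Bool), MeasurableSpace.comap (M d z) inferInstance)
    ⊔ (⨆ (d : Bool) (m : Bool), MeasurableSpace.comap (Ypo d m) inferInstance)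

lemma measurable_potentialSigma_mediator (d z : Bool) :
    Measurable[potentialSigma M Ypo] (M d z) :=
  Measurable.of_comap_le <|
    (le_iSup₂ (f := fun d z => MeasurableSpace.comap (M d z) inferInstance) d z).trans le_sup_left

lemma measurable_potentialSigma_outcome (d m : Bool) :
    Measurable[potentialSigma M Ypo] (Ypo d m) :=
  Measurable.of_comap_le <|
    (le_iSup₂ (f := fun d m => MeasurableSpace.comap (Ypo d m) inferInstance) d m).trans
      le_sup_right

end PotentialSigma

/-- with all potential mediators and potential outcomes jointly independent
of `(D, Z)` and `P(D=0, Z=z) > 0`, the conditional-mean contrasts of the observed mediator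
`M = M_{D,Z}` and observed outcome `Y = Y_{D,M}` across instrument arms within the control
group identify `E[M_{0,1} - M_{0,0}]` and `E[Y_{0,M_{0,1}} - Y_{0,M_{0,0}}]`, and hence
the Wald ratio identifies their ratio. -/
theorem stmt_3 {Ω : Type*} [MeasurableSpace Ω] (P : Measure Ω) [IsProbabilityMeasure P]
    (D Z : Ω → Bool) (M : Bool → Bool → Ω → Bool) (Ypo : Bool → Bool → Ω → ℝ)
    (hD : Measurable D) (hZ : Measurable Z) (hM : ∀ d z, Measurable (M d z))
    (hYint : ∀ d m, Integrable (Ypo d m) P)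
    (hIndep : Indep
      ((⨆ (d : Bool) (z : Bool), MeasurableSpace.comap (M d z) inferInstance)
        ⊔ (⨆ (d : Bool) (m : Bool), MeasurableSpace.comap (Ypo d m) inferInstance))
      (MeasurableSpace.comap (fun ω => (D ω, Z ω)) inferInstance) P)
    (hpos : ∀ z : Bool, 0 < (P {ω | D ω = false ∧ Z ω = z}).toReal) :
    (condMean P (fun ω => bR (M (D ω) (Z ω) ω)) {ω | D ω = false ∧ Z ω = true}
        - condMean P (fun ω => bR (M (D ω) (Z ω) ω)) {ω | D ω = false ∧ Z ω = false}
      = ∫ ω, (bR (M false true ω) - bR (M false false ω)) ∂P)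
    ∧ (condMean P (fun ω => Ypo (D ω) (M (D ω) (Z ω) ω) ω) {ω | D ω = false ∧ Z ω = true}
        - condMean P (fun ω => Ypo (D ω) (M (D ω) (Z ω) ω) ω) {ω | D ω = false ∧ Z ω = false}
      = ∫ ω, (Ypo false (M false true ω) ω - Ypo false (M false false ω) ω) ∂P)
    ∧ ((∫ ω, (bR (M false true ω) - bR (M false false ω)) ∂P) ≠ 0 →
      (condMean P (fun ω => Ypo (D ω) (M (D ω) (Z ω) ω) ω) {ω | D ω = false ∧ Z ω = true}
          - condMean P (fun ω => Ypo (D ω) (M (D ω) (Z ω) ω) ω) {ω | D ω = false ∧ Z ω = false})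
        / (condMean P (fun ω => bR (M (D ω) (Z ω) ω)) {ω | D ω = false ∧ Z ω = true}
          - condMean P (fun ω => bR (M (D ω) (Z ω) ω)) {ω | D ω = false ∧ Z ω = false})
      = (∫ ω, (Ypo false (M false true ω) ω - Ypo false (M false false ω) ω) ∂P)
        / (∫ ω, (bR (M false true ω) - bR (M false false ω)) ∂P)) := by
  have hcond : ∀ z {X W : Ω → ℝ}, Measurable[potentialSigma M Ypo] X → Integrable X P →
      (∀ ω, D ω = false → Z ω = z → W ω = X ω) →
      condMean P W {ω | D ω = false ∧ Z ω = z} = ∫ ω, X ω ∂P := by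
    intro z X W hXG hX hW
    have harm : MeasurableSet[MeasurableSpace.comap (fun ω => (D ω, Z ω)) inferInstance]
        {ω | D ω = false ∧ Z ω = z} :=
      ⟨{(false, z)}, measurableSet_singleton _, by ext; simp [Prod.ext_iff]⟩
    exact condMean_eq_integral_of_indep_s3 hIndep (hD.prodMk hZ).comap_le hXG hX.aemeasurable harm
      (hpos z).ne' fun ω hω => hW ω hω.1 hω.2
  have hMint : ∀ z, Integrable (fun ω => bR (M false z ω)) P := fun z =>
    integrable_bool_select (X := fun b _ => bR b) (hM false z) fun _ => integrable_const _
  have hYsel : ∀ z, Integrable (fun ω => Ypo false (M false z ω) ω) P := fun z =>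
    integrable_bool_select (hM false z) (hYint false)
  have hMz : ∀ z, condMean P (fun ω => bR (M (D ω) (Z ω) ω)) {ω | D ω = false ∧ Z ω = z}
      = ∫ ω, bR (M false z ω) ∂P := fun z =>
    hcond z (measurable_bool_select (X := fun b _ => bR b)
        (measurable_potentialSigma_mediator M Ypo false z) fun _ => measurable_const)
      (hMint z) fun ω h0 hz => by simp [h0, hz]
  have hYz : ∀ z, condMean P (fun ω => Ypo (D ω) (M (D ω) (Z ω) ω) ω)
      {ω | D ω = false ∧ Z ω = z} = ∫ ω, Ypo false (M false z ω) ω ∂P := fun z =>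
    hcond z (measurable_bool_select (measurable_potentialSigma_mediator M Ypo false z)
        (measurable_potentialSigma_outcome M Ypo false))
      (hYsel z) fun ω h0 hz => by simp [h0, hz]
  rw [hMz, hMz, hYz, hYz, integral_sub (hMint true) (hMint false),
    integral_sub (hYsel true) (hYsel false)]
  exact ⟨rfl, rfl, fun _ => rfl⟩
end

section
/- Let M_{1,1}, M_{1,0} be {0,1}-valued random variables and Y_{1,1}, Y_{1,0} integrable random variables with P(M_{1,1} > M_{1,0}) ≠ P(M_{1,1} < M_{1,0}). Then E[Y_{1,M_{1,1}} − Y_{1,M_{1,0}}] / E[M_{1,1} − M_{1,0}] = ( E[(Y_{1,1} − Y_{1,0})·1{M_{1,1} > M_{1,0}}] − E[(Y_{1,1} − Y_{1,0})·1{M_{1,1} < M_{1,0}}] ) / ( P(M_{1,1} > M_{1,0}) − P(M_{1,1} < M_{1,0}) ), so the Wald-type IV coefficient α₁^{IV} is a weighted difference of the average effects Y_{1,1} − Y_{1,0} for those with M_{1,1} > M_{1,0} and those with M_{1,1} < M_{1,0}. -/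
open MeasureTheory ProbabilityTheory

theorem measurableSet_lt_of_countable {Ω α : Type*} [MeasurableSpace Ω] [MeasurableSpace α]
    [Countable α] [MeasurableSingletonClass α] [LT α] {X Y : Ω → α}
    (hX : Measurable X) (hY : Measurable Y) :
    MeasurableSet {ω | X ω < Y ω} :=
  (hX.prodMk hY) (Set.to_countable {p : α × α | p.1 < p.2}).measurableSet

theorem sub_comp_eq_indicator_sub_indicator {Ω E : Type*} [AddGroup E] (X Y : Ω → Bool)
    (f : Bool → Ω → E) :
    (fun ω => f (X ω) ω - f (Y ω) ω)
      = {ω | Y ω < X ω}.indicator (f true - f false)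
        - {ω | X ω < Y ω}.indicator (f true - f false) := by
  funext ω
  simp only [Pi.sub_apply, Set.indicator_apply, Set.mem_ofPred_eq]
  cases X ω <;> cases Y ω <;> simp +decide

theorem integral_sub_comp_eq_setIntegral_sub_setIntegral {Ω E : Type*} [MeasurableSpace Ω]
    [NormedAddCommGroup E] [NormedSpace ℝ E] {μ : Measure Ω} {X Y : Ω → Bool}
    (hX : Measurable X) (hY : Measurable Y) {f : Bool → Ω → E}
    (hf : ∀ b, Integrable (f b) μ) :
    ∫ ω, (f (X ω) ω - f (Y ω) ω) ∂μ
      = ∫ ω in {ω | Y ω < X ω}, (f true ω - f false ω) ∂μ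
        - ∫ ω in {ω | X ω < Y ω}, (f true ω - f false ω) ∂μ := by
  have hYX : MeasurableSet {ω | Y ω < X ω} := measurableSet_lt_of_countable hY hX
  have hXY : MeasurableSet {ω | X ω < Y ω} := measurableSet_lt_of_countable hX hY
  have hdiff : Integrable (f true - f false) μ := (hf true).sub (hf false)
  rw [sub_comp_eq_indicator_sub_indicator X Y f, integral_sub' (hdiff.indicator hYX)
    (hdiff.indicator hXY), integral_indicator hYX, integral_indicator hXY]
  rfl

theorem stmt_5_general {Ω : Type*} [MeasurableSpace Ω] (P : Measure Ω) [IsProbabilityMeasure P]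
    (M11 M10 : Ω → Bool) (Y1 : Bool → Ω → ℝ)
    (hM11 : Measurable M11) (hM10 : Measurable M10)
    (hY : ∀ m, Integrable (Y1 m) P) :
    (∫ ω, (Y1 (M11 ω) ω - Y1 (M10 ω) ω) ∂P) / (∫ ω, (bR (M11 ω) - bR (M10 ω)) ∂P)
      = ((∫ ω in {ω | M10 ω < M11 ω}, (Y1 true ω - Y1 false ω) ∂P)
          - (∫ ω in {ω | M11 ω < M10 ω}, (Y1 true ω - Y1 false ω) ∂P))
        / ((P {ω | M10 ω < M11 ω}).toReal - (P {ω | M11 ω < M10 ω}).toReal) := by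
  rw [integral_sub_comp_eq_setIntegral_sub_setIntegral hM11 hM10 hY,
    integral_sub_comp_eq_setIntegral_sub_setIntegral (f := fun b _ => bR b) hM11 hM10
      fun _ => integrable_const _]
  simp [bR, measureReal_def]

/-- the Wald-type IV coefficient `α₁^{IV}` is a weighted difference of the
average effects `Y_{1,1} - Y_{1,0}` over those with `M_{1,1} > M_{1,0}` and those with
`M_{1,1} < M_{1,0}`. -/
theorem stmt_5 {Ω : Type*} [MeasurableSpace Ω] (P : Measure Ω) [IsProbabilityMeasure P]
    (M11 M10 : Ω → Bool) (Y1 : Bool → Ω → ℝ)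
    (hM11 : Measurable M11) (hM10 : Measurable M10)
    (hY : ∀ m, Integrable (Y1 m) P)
    (hne : (P {ω | M10 ω < M11 ω}).toReal ≠ (P {ω | M11 ω < M10 ω}).toReal) :
    (∫ ω, (Y1 (M11 ω) ω - Y1 (M10 ω) ω) ∂P) / (∫ ω, (bR (M11 ω) - bR (M10 ω)) ∂P)
      = ((∫ ω in {ω | M10 ω < M11 ω}, (Y1 true ω - Y1 false ω) ∂P)
          - (∫ ω in {ω | M11 ω < M10 ω}, (Y1 true ω - Y1 false ω) ∂P))
        / ((P {ω | M10 ω < M11 ω}).toReal - (P {ω | M11 ω < M10 ω}).toReal) :=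
  stmt_5_general P M11 M10 Y1 hM11 hM10 hY
end

section
/- Let Z be a {0,1}-valued random variable and suppose the family consisting of the {0,1}-valued potential mediators (M_{d,z})_{d,z∈{0,1}} and the integrable potential outcomes Y_{0,0}, Y_{0,1} is independent of Z. Then the natural indirect effect satisfies E[Y_{0,M_{1,Z}} − Y_{0,M_{0,Z}}] = Σ_{z∈{0,1}} ( E[(Y_{0,1} − Y_{0,0})·1{M_{1,z} > M_{0,z}}] − E[(Y_{0,1} − Y_{0,0})·1{M_{1,z} < M_{0,z}}] )·P(Z=z). -/
open MeasureTheory ProbabilityTheory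

/-! Since the mediator is binary, `Y_{0,M_{1,z}} - Y_{0,M_{0,z}}` equals the jump
`Y_{0,1} - Y_{0,0}` on compliers `{M_{0,z} < M_{1,z}}`, minus it on defiers `{M_{1,z} < M_{0,z}}`,
and `0` elsewhere: a function `g z` of the mediators and outcomes alone. Splitting
`E[g Z] = Σ_z E[g z · 1{Z = z}]`, independence of `g z` from `Z` factors each term as
`E[g z] · P(Z = z)`. -/

theorem sub_eq_ite_lt_sub_ite_lt (f : Bool → ℝ) (a b : Bool) :
    f a - f b = (if b < a then f true - f false else 0) - if a < b then f true - f false else 0 := by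
  cases a <;> cases b <;> simp +decide

theorem measurableSet_lt_of_discrete {Ω α : Type*} [LT α] [MeasurableSpace α]
    [DiscreteMeasurableSpace (α × α)] {m : MeasurableSpace Ω} {f g : Ω → α}
    (hf : Measurable[m] f) (hg : Measurable[m] g) : MeasurableSet[m] {ω | f ω < g ω} :=
  (hf.prodMk hg) (MeasurableSet.of_discrete (s := {p : α × α | p.1 < p.2}))

section Independence

variable {Ω ι : Type*} [MeasurableSpace Ω] {P : Measure Ω} [MeasurableSpace ι]

theorem ProbabilityTheory.IndepFun.setIntegral_preimage {g : Ω → ℝ} {Z : Ω → ι}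
    (h : g ⟂ᵢ[P] Z) (hZ : Measurable Z) (hg : AEStronglyMeasurable g P) {s : Set ι}
    (hs : MeasurableSet s) :
    ∫ ω in Z ⁻¹' s, g ω ∂P = (∫ ω, g ω ∂P) * P.real (Z ⁻¹' s) := by
  have hχ : Measurable (s.indicator (1 : ι → ℝ)) := measurable_one.indicator hs
  calc ∫ ω in Z ⁻¹' s, g ω ∂P = ∫ ω, g ω * s.indicator 1 (Z ω) ∂P := by
        rw [← integral_indicator (hZ hs)]
        congr 1 with ω
        by_cases hω : Z ω ∈ s <;> simp [hω]
    _ = (∫ ω, g ω ∂P) * ∫ ω, s.indicator 1 (Z ω) ∂P :=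
        (h.comp measurable_id hχ).integral_fun_mul_eq_mul_integral hg
          (hχ.comp hZ).aestronglyMeasurable
    _ = (∫ ω, g ω ∂P) * P.real (Z ⁻¹' s) := by
        rw [← integral_indicator_one (hZ hs)]
        rfl

theorem integral_comp_eq_sum_mul_of_indepFun [Fintype ι] [MeasurableSingletonClass ι]
    {Z : Ω → ι} {g : ι → Ω → ℝ} (hZ : Measurable Z) (hg : ∀ i, Integrable (g i) P)
    (hind : ∀ i, g i ⟂ᵢ[P] Z) :
    ∫ ω, g (Z ω) ω ∂P = ∑ i, (∫ ω, g i ω ∂P) * P.real {ω | Z ω = i} := by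
  have hsplit : (fun ω => g (Z ω) ω) = fun ω => ∑ i, (Z ⁻¹' {i}).indicator (g i) ω := by
    ext ω
    rw [Finset.sum_eq_single (Z ω) (fun i _ hi => by simp [Ne.symm hi]) (by simp)]
    simp
  rw [hsplit, integral_finsetSum _ fun i _ => (hg i).indicator (hZ (measurableSet_singleton i))]
  refine Finset.sum_congr rfl fun i _ => ?_
  rw [integral_indicator (hZ (measurableSet_singleton i))]
  exact (hind i).setIntegral_preimage hZ (hg i).1 (measurableSet_singleton i)

end Independence

theorem integral_sub_eq_sum_mul_of_indep {Ω : Type*} {m : MeasurableSpace Ω}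
    [MeasurableSpace Ω] {P : Measure Ω} {Z : Ω → Bool} {M : Bool → Bool → Ω → Bool}
    {Y0 : Bool → Ω → ℝ} (hZ : Measurable Z) (hM : ∀ d z, Measurable (M d z))
    (hY : ∀ b, Integrable (Y0 b) P) (hind : Indep m (MeasurableSpace.comap Z inferInstance) P)
    (hMm : ∀ d z, Measurable[m] (M d z)) (hYm : ∀ b, Measurable[m] (Y0 b)) :
    ∫ ω, (Y0 (M true (Z ω) ω) ω - Y0 (M false (Z ω) ω) ω) ∂P
      = ∑ z : Bool,
          ((∫ ω in {ω | M false z ω < M true z ω}, (Y0 true ω - Y0 false ω) ∂P)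
            - ∫ ω in {ω | M true z ω < M false z ω}, (Y0 true ω - Y0 false ω) ∂P)
          * (P {ω | Z ω = z}).toReal := by
  set D : Ω → ℝ := Y0 true - Y0 false
  set g : Bool → Ω → ℝ := fun z =>
    {ω | M false z ω < M true z ω}.indicator D - {ω | M true z ω < M false z ω}.indicator D
  have hD : Integrable D P := (hY true).sub (hY false)
  have hDm : Measurable[m] D := (hYm true).sub (hYm false)
  have hg_meas : ∀ z, Measurable[m] (g z) := fun z =>
    (hDm.indicator (measurableSet_lt_of_discrete (hMm _ _) (hMm _ _))).sub
      (hDm.indicator (measurableSet_lt_of_discrete (hMm _ _) (hMm _ _)))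
  have hlt : ∀ d d' z, MeasurableSet {ω | M d z ω < M d' z ω} := fun d d' z =>
    measurableSet_lt_of_discrete (hM d z) (hM d' z)
  calc ∫ ω, (Y0 (M true (Z ω) ω) ω - Y0 (M false (Z ω) ω) ω) ∂P = ∫ ω, g (Z ω) ω ∂P := by
        congr 1 with ω
        simp only [g, D, Pi.sub_apply, Set.indicator_apply, Set.mem_ofPred_eq]
        exact sub_eq_ite_lt_sub_ite_lt (Y0 · ω) _ _
    _ = ∑ z, (∫ ω, g z ω ∂P) * P.real {ω | Z ω = z} :=
        integral_comp_eq_sum_mul_of_indepFun hZ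
          (fun z => (hD.indicator (hlt _ _ z)).sub (hD.indicator (hlt _ _ z)))
          fun z => indep_of_indep_of_le_left hind (hg_meas z).comap_le
    _ = _ := by
        refine Finset.sum_congr rfl fun z _ => ?_
        simp only [g, Pi.sub_apply]
        rw [integral_sub (hD.indicator (hlt _ _ z)) (hD.indicator (hlt _ _ z)),
          integral_indicator (hlt _ _ z), integral_indicator (hlt _ _ z), measureReal_def]
        rfl

theorem stmt_10_general {Ω : Type*} [MeasurableSpace Ω] (P : Measure Ω)
    (Z : Ω → Bool) (M : Bool → Bool → Ω → Bool) (Y0 : Bool → Ω → ℝ)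
    (hZ : Measurable Z) (hM : ∀ d z, Measurable (M d z))
    (hY : ∀ m, Integrable (Y0 m) P)
    (hIndep : Indep
      ((⨆ (d : Bool) (z : Bool), MeasurableSpace.comap (M d z) inferInstance)
        ⊔ (⨆ (m : Bool), MeasurableSpace.comap (Y0 m) inferInstance))
      (MeasurableSpace.comap Z inferInstance) P) :
    ∫ ω, (Y0 (M true (Z ω) ω) ω - Y0 (M false (Z ω) ω) ω) ∂P
      = ∑ z : Bool,
          ((∫ ω in {ω | M false z ω < M true z ω}, (Y0 true ω - Y0 false ω) ∂P)
            - ∫ ω in {ω | M true z ω < M false z ω}, (Y0 true ω - Y0 false ω) ∂P)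
          * (P {ω | Z ω = z}).toReal :=
  integral_sub_eq_sum_mul_of_indep hZ hM hY hIndep
    (fun d z => (comap_measurable (M d z)).mono
      ((le_iSup₂ (f := fun d z => MeasurableSpace.comap (M d z) inferInstance) d z).trans
        le_sup_left) le_rfl)
    (fun b => (comap_measurable (Y0 b)).mono
      ((le_iSup (fun b => MeasurableSpace.comap (Y0 b) inferInstance) b).trans le_sup_right)
      le_rfl)

/-- if the potential mediators and the potential outcomes `Y_{0,0}, Y_{0,1}`
are jointly independent of `Z`, the natural indirect effect `E[Y_{0,M_{1,Z}} - Y_{0,M_{0,Z}}]`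
decomposes over instrument values as a `P(Z=z)`-weighted sum of weighted differences of
subgroup average mediator effects. -/
theorem stmt_10 {Ω : Type*} [MeasurableSpace Ω] (P : Measure Ω) [IsProbabilityMeasure P]
    (Z : Ω → Bool) (M : Bool → Bool → Ω → Bool) (Y0 : Bool → Ω → ℝ)
    (hZ : Measurable Z) (hM : ∀ d z, Measurable (M d z))
    (hY : ∀ m, Integrable (Y0 m) P)
    (hIndep : Indep
      ((⨆ (d : Bool) (z : Bool), MeasurableSpace.comap (M d z) inferInstance)
        ⊔ (⨆ (m : Bool), MeasurableSpace.comap (Y0 m) inferInstance))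
      (MeasurableSpace.comap Z inferInstance) P) :
    ∫ ω, (Y0 (M true (Z ω) ω) ω - Y0 (M false (Z ω) ω) ω) ∂P
      = ∑ z : Bool,
          ((∫ ω in {ω | M false z ω < M true z ω}, (Y0 true ω - Y0 false ω) ∂P)
            - ∫ ω in {ω | M true z ω < M false z ω}, (Y0 true ω - Y0 false ω) ∂P)
          * (P {ω | Z ω = z}).toReal :=
  stmt_10_general P Z M Y0 hZ hM hY hIndep
end

section
/- Let Z be a {0,1}-valued random variable, let (M_{d,z})_{d,z∈{0,1}} be {0,1}-valued potential mediators and Y_{0,0}, Y_{0,1} integrable potential outcomes. Suppose E[M_{0,1} − M_{0,0}] ≠ 0 and there is a constant c ∈ ℝ with Y_{0,1} − Y_{0,0} = c almost surely. Then ( E[Y_{0,M_{0,1}} − Y_{0,M_{0,0}}] / E[M_{0,1} − M_{0,0}] ) · E[M_{1,Z} − M_{0,Z}] = E[Y_{0,M_{1,Z}} − Y_{0,M_{0,Z}}]; that is, under constant effects the IV estimand NIE_0^{IV} equals the natural indirect effect NIE_0. -/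
open MeasureTheory ProbabilityTheory

/-- under a constant mediator effect `Y_{0,1} - Y_{0,0} = c` a.s. (and a
nonzero first stage `E[M_{0,1} - M_{0,0}] ≠ 0`), the IV estimand `NIE_0^{IV}` equals the
natural indirect effect `NIE_0 = E[Y_{0,M_{1,Z}} - Y_{0,M_{0,Z}}]`. -/
theorem stmt_12 {Ω : Type*} [MeasurableSpace Ω] (P : Measure Ω) [IsProbabilityMeasure P]
    (Z : Ω → Bool) (M : Bool → Bool → Ω → Bool) (Y0 : Bool → Ω → ℝ)
    (hZ : Measurable Z) (hM : ∀ d z, Measurable (M d z))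
    (hY : ∀ m, Integrable (Y0 m) P)
    (hden : (∫ ω, (bR (M false true ω) - bR (M false false ω)) ∂P) ≠ 0)
    (c : ℝ) (hc : ∀ᵐ ω ∂P, Y0 true ω - Y0 false ω = c) :
    ((∫ ω, (Y0 (M false true ω) ω - Y0 (M false false ω) ω) ∂P)
        / (∫ ω, (bR (M false true ω) - bR (M false false ω)) ∂P))
      * (∫ ω, (bR (M true (Z ω) ω) - bR (M false (Z ω) ω)) ∂P)
      = ∫ ω, (Y0 (M true (Z ω) ω) ω - Y0 (M false (Z ω) ω) ω) ∂P := by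
  have key : ∀ (a b : Bool) (ω : Ω), Y0 true ω - Y0 false ω = c →
      Y0 a ω - Y0 b ω = c * (bR a - bR b) := by
    intro a b ω hω
    cases a <;> cases b <;> simp [bR] <;> linarith
  have h1 : (∫ ω, (Y0 (M false true ω) ω - Y0 (M false false ω) ω) ∂P)
      = c * ∫ ω, (bR (M false true ω) - bR (M false false ω)) ∂P := by
    rw [← MeasureTheory.integral_const_mul]
    refine integral_congr_ae ?_
    filter_upwards [hc] with ω hω
    exact key _ _ ω hω
  have h2 : (∫ ω, (Y0 (M true (Z ω) ω) ω - Y0 (M false (Z ω) ω) ω) ∂P)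
      = c * ∫ ω, (bR (M true (Z ω) ω) - bR (M false (Z ω) ω)) ∂P := by
    rw [← MeasureTheory.integral_const_mul]
    refine integral_congr_ae ?_
    filter_upwards [hc] with ω hω
    exact key _ _ ω hω
  rw [h1, h2, mul_div_assoc, div_self hden, mul_one]
end

section
/- Let Z be a {0,1}-valued random variable, let (M_{d,z})_{d,z∈{0,1}} be {0,1}-valued potential mediators and Y_{1,0}, Y_{1,1} integrable potential outcomes. Suppose E[M_{1,1} − M_{1,0}] ≠ 0 and there is a constant c ∈ ℝ with Y_{1,1} − Y_{1,0} = c almost surely. Then ( E[Y_{1,M_{1,1}} − Y_{1,M_{1,0}}] / E[M_{1,1} − M_{1,0}] ) · E[M_{1,Z} − M_{0,Z}] = E[Y_{1,M_{1,Z}} − Y_{1,M_{0,Z}}]; that is, under constant effects the IV estimand NIE_1^{IV} equals the natural indirect effect NIE_1. -/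
open MeasureTheory ProbabilityTheory

/-- under a constant mediator effect `Y_{1,1} - Y_{1,0} = c` a.s. (and a
nonzero first stage `E[M_{1,1} - M_{1,0}] ≠ 0`), the IV estimand `NIE_1^{IV}` equals the
natural indirect effect `NIE_1 = E[Y_{1,M_{1,Z}} - Y_{1,M_{0,Z}}]`. -/
theorem stmt_13 {Ω : Type*} [MeasurableSpace Ω] (P : Measure Ω) [IsProbabilityMeasure P]
    (Z : Ω → Bool) (M : Bool → Bool → Ω → Bool) (Y1 : Bool → Ω → ℝ)
    (hZ : Measurable Z) (hM : ∀ d z, Measurable (M d z))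
    (hY : ∀ m, Integrable (Y1 m) P)
    (hden : (∫ ω, (bR (M true true ω) - bR (M true false ω)) ∂P) ≠ 0)
    (c : ℝ) (hc : ∀ᵐ ω ∂P, Y1 true ω - Y1 false ω = c) :
    ((∫ ω, (Y1 (M true true ω) ω - Y1 (M true false ω) ω) ∂P)
        / (∫ ω, (bR (M true true ω) - bR (M true false ω)) ∂P))
      * (∫ ω, (bR (M true (Z ω) ω) - bR (M false (Z ω) ω)) ∂P)
      = ∫ ω, (Y1 (M true (Z ω) ω) ω - Y1 (M false (Z ω) ω) ω) ∂P := by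
  have key : ∀ f g : Ω → Bool,
      (∫ ω, (Y1 (f ω) ω - Y1 (g ω) ω) ∂P) = c * ∫ ω, (bR (f ω) - bR (g ω)) ∂P := by
    intro f g
    rw [← MeasureTheory.integral_const_mul]
    refine integral_congr_ae ?_
    filter_upwards [hc] with ω hω
    cases hf : f ω <;> cases hg : g ω <;> simp [bR] <;> linarith
  rw [key, key, mul_div_assoc, div_self hden, mul_one]
end

section
/- Let Z be a {0,1}-valued random variable, let (M_{d,z})_{d,z∈{0,1}} be {0,1}-valued potential mediators and (Y_{d,m})_{d,m∈{0,1}} integrable potential outcomes. Suppose E[M_{1,1} − M_{1,0}] ≠ 0, E[M_{0,1} − M_{0,0}] ≠ 0, and there is a constant c₁ ∈ ℝ with Y_{1,1} − Y_{1,0} = c₁ almost surely. Define α₁ := E[Y_{1,M_{1,1}} − Y_{1,M_{1,0}}]/E[M_{1,1} − M_{1,0}], β₁ := E[Y_{0,M_{0,1}} − Y_{0,M_{0,0}}]/E[M_{0,1} − M_{0,0}], α₀ := E[Y_{1,M_{1,Z}}] − α₁·E[M_{1,Z}], and β₀ := E[Y_{0,M_{0,Z}}] − β₁·E[M_{0,Z}].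 Then α₀ − β₀ + (α₁ − β₁)·E[M_{0,Z}] = E[Y_{1,M_{0,Z}} − Y_{0,M_{0,Z}}]; that is, under constant effects the IV estimand NDE_0^{IV} (with the mediator held at its level under the control state) equals the natural direct effect NDE_0. -/
open MeasureTheory ProbabilityTheory

/-! Writing `Y_{d,N} = Y_{d,0} + N·(Y_{d,1} - Y_{d,0})`, the constant effect
`Y_{1,1} - Y_{1,0} = c₁` gives `E[Y_{1,N}] = E[Y_{1,0}] + c₁·E[N]` for every binary mediator `N`.
Hence the Wald ratio `α₁` equals `c₁`, and substituting into `α₀ - β₀ + (α₁ - β₁)·E[M_{0,Z}]`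
the `β₁`-terms cancel, leaving
`E[Y_{1,0}] + c₁·E[M_{0,Z}] - E[Y_{0,M_{0,Z}}] = E[Y_{1,M_{0,Z}} - Y_{0,M_{0,Z}}]`. -/

lemma apply_bool_eq_add_bR_mul (f : Bool → ℝ) (b : Bool) :
    f b = f false + bR b * (f true - f false) := by
  cases b <;> simp [bR]

lemma measurable_apply_index {Ω ι γ : Type*} [MeasurableSpace Ω] [MeasurableSpace ι]
    [MeasurableSpace γ] [Countable ι] [MeasurableSingletonClass ι]
    {f : ι → Ω → γ} {N : Ω → ι} (hf : ∀ i, Measurable (f i)) (hN : Measurable N) :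
    Measurable fun ω => f (N ω) ω :=
  (measurable_from_prod_countable_right (f := fun p : ι × Ω => f p.1 p.2) hf).comp
    (hN.prodMk measurable_id)

section

variable {Ω : Type*} [MeasurableSpace Ω] {P : Measure Ω}

lemma integrable_apply_bool_index {Y : Bool → Ω → ℝ} (hY : ∀ b, Integrable (Y b) P)
    {N : Ω → Bool} (hN : Measurable N) : Integrable (fun ω => Y (N ω) ω) P := by
  have hpiecewise : (fun ω => Y (N ω) ω) = {ω | N ω = true}.piecewise (Y true) (Y false) := by
    funext ω
    by_cases h : N ω = true <;> simp [Set.piecewise, h]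
  rw [hpiecewise]
  exact .piecewise (hN (measurableSet_singleton true)) (hY true).integrableOn
    (hY false).integrableOn

lemma integrable_bR_comp [IsFiniteMeasure P] {N : Ω → Bool} (hN : Measurable N) :
    Integrable (fun ω => bR (N ω)) P :=
  integrable_apply_bool_index (Y := fun b _ => bR b) (fun _ => integrable_const _) hN

variable [IsFiniteMeasure P] {Y : Bool → Ω → ℝ} {c : ℝ}

lemma integral_apply_bool_of_ae_sub_eq_const (hY : Integrable (Y false) P)
    (hc : ∀ᵐ ω ∂P, Y true ω - Y false ω = c) {N : Ω → Bool} (hN : Measurable N) :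
    ∫ ω, Y (N ω) ω ∂P = (∫ ω, Y false ω ∂P) + c * ∫ ω, bR (N ω) ∂P := by
  have hY_ae : (fun ω => Y (N ω) ω) =ᵐ[P] fun ω => Y false ω + bR (N ω) * c := by
    filter_upwards [hc] with ω hω
    rw [apply_bool_eq_add_bR_mul (Y · ω) (N ω), hω]
  rw [integral_congr_ae hY_ae, integral_add hY ((integrable_bR_comp hN).mul_const c),
    integral_mul_const, mul_comm]

lemma integral_sub_apply_bool_of_ae_sub_eq_const (hY : ∀ b, Integrable (Y b) P)
    (hc : ∀ᵐ ω ∂P, Y true ω - Y false ω = c) {N₁ N₀ : Ω → Bool}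
    (hN₁ : Measurable N₁) (hN₀ : Measurable N₀) :
    ∫ ω, (Y (N₁ ω) ω - Y (N₀ ω) ω) ∂P = c * ∫ ω, (bR (N₁ ω) - bR (N₀ ω)) ∂P := by
  rw [integral_sub (integrable_apply_bool_index hY hN₁) (integrable_apply_bool_index hY hN₀),
    integral_apply_bool_of_ae_sub_eq_const (hY false) hc hN₁,
    integral_apply_bool_of_ae_sub_eq_const (hY false) hc hN₀,
    integral_sub (integrable_bR_comp hN₁) (integrable_bR_comp hN₀)]
  ring

end

theorem stmt_14_general {Ω : Type*} [MeasurableSpace Ω] (P : Measure Ω) [IsProbabilityMeasure P]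
    (Z : Ω → Bool) (M : Bool → Bool → Ω → Bool) (Ypo : Bool → Bool → Ω → ℝ)
    (hZ : Measurable Z) (hM : ∀ d z, Measurable (M d z))
    (hY : ∀ d m, Integrable (Ypo d m) P)
    (hden1 : (∫ ω, (bR (M true true ω) - bR (M true false ω)) ∂P) ≠ 0)
    (c₁ : ℝ) (hc₁ : ∀ᵐ ω ∂P, Ypo true true ω - Ypo true false ω = c₁)
    (α₁ β₁ α₀ β₀ : ℝ)
    (hα₁ : α₁ = (∫ ω, (Ypo true (M true true ω) ω - Ypo true (M true false ω) ω) ∂P)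
        / (∫ ω, (bR (M true true ω) - bR (M true false ω)) ∂P))
    (hα₀ : α₀ = (∫ ω, Ypo true (M true (Z ω) ω) ω ∂P)
        - α₁ * ∫ ω, bR (M true (Z ω) ω) ∂P)
    (hβ₀ : β₀ = (∫ ω, Ypo false (M false (Z ω) ω) ω ∂P)
        - β₁ * ∫ ω, bR (M false (Z ω) ω) ∂P) :
    α₀ - β₀ + (α₁ - β₁) * ∫ ω, bR (M false (Z ω) ω) ∂P
      = ∫ ω, (Ypo true (M false (Z ω) ω) ω - Ypo false (M false (Z ω) ω) ω) ∂P := by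
  have hα₁c : α₁ = c₁ := by
    rw [hα₁, integral_sub_apply_bool_of_ae_sub_eq_const (hY true) hc₁ (hM true true)
      (hM true false), mul_div_cancel_right₀ _ hden1]
  have hMZ : ∀ d, Measurable fun ω => M d (Z ω) ω := fun d => measurable_apply_index (hM d) hZ
  rw [hα₀, hβ₀, hα₁c, integral_sub (integrable_apply_bool_index (hY true) (hMZ false))
      (integrable_apply_bool_index (hY false) (hMZ false)),
    integral_apply_bool_of_ae_sub_eq_const (hY true false) hc₁ (hMZ true),
    integral_apply_bool_of_ae_sub_eq_const (hY true false) hc₁ (hMZ false)]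
  ring

/-- under a constant treated-arm mediator effect `Y_{1,1} - Y_{1,0} = c₁` a.s.
(and nonzero first stages), the IV estimand `NDE_0^{IV} = α₀ - β₀ + (α₁ - β₁)·E[M_{0,Z}]`
equals the natural direct effect `NDE_0 = E[Y_{1,M_{0,Z}} - Y_{0,M_{0,Z}}]`. -/
theorem stmt_14 {Ω : Type*} [MeasurableSpace Ω] (P : Measure Ω) [IsProbabilityMeasure P]
    (Z : Ω → Bool) (M : Bool → Bool → Ω → Bool) (Ypo : Bool → Bool → Ω → ℝ)
    (hZ : Measurable Z) (hM : ∀ d z, Measurable (M d z))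
    (hY : ∀ d m, Integrable (Ypo d m) P)
    (hden1 : (∫ ω, (bR (M true true ω) - bR (M true false ω)) ∂P) ≠ 0)
    (hden0 : (∫ ω, (bR (M false true ω) - bR (M false false ω)) ∂P) ≠ 0)
    (c₁ : ℝ) (hc₁ : ∀ᵐ ω ∂P, Ypo true true ω - Ypo true false ω = c₁)
    (α₁ β₁ α₀ β₀ : ℝ)
    (hα₁ : α₁ = (∫ ω, (Ypo true (M true true ω) ω - Ypo true (M true false ω) ω) ∂P)
        / (∫ ω, (bR (M true true ω) - bR (M true false ω)) ∂P))
    (hβ₁ : β₁ = (∫ ω, (Ypo false (M false true ω) ω - Ypo false (M false false ω) ω) ∂P)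
        / (∫ ω, (bR (M false true ω) - bR (M false false ω)) ∂P))
    (hα₀ : α₀ = (∫ ω, Ypo true (M true (Z ω) ω) ω ∂P)
        - α₁ * ∫ ω, bR (M true (Z ω) ω) ∂P)
    (hβ₀ : β₀ = (∫ ω, Ypo false (M false (Z ω) ω) ω ∂P)
        - β₁ * ∫ ω, bR (M false (Z ω) ω) ∂P) :
    α₀ - β₀ + (α₁ - β₁) * ∫ ω, bR (M false (Z ω) ω) ∂P
      = ∫ ω, (Ypo true (M false (Z ω) ω) ω - Ypo false (M false (Z ω) ω) ω) ∂P :=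
  stmt_14_general P Z M Ypo hZ hM hY hden1 c₁ hc₁ α₁ β₁ α₀ β₀ hα₁ hα₀ hβ₀
end

section
/- Let Z be a {0,1}-valued random variable, let (M_{d,z})_{d,z∈{0,1}} be {0,1}-valued potential mediators and (Y_{d,m})_{d,m∈{0,1}} integrable potential outcomes. Suppose E[M_{1,1} − M_{1,0}] ≠ 0, E[M_{0,1} − M_{0,0}] ≠ 0, and there is a constant c₀ ∈ ℝ with Y_{0,1} − Y_{0,0} = c₀ almost surely. Define α₁ := E[Y_{1,M_{1,1}} − Y_{1,M_{1,0}}]/E[M_{1,1} − M_{1,0}], β₁ := E[Y_{0,M_{0,1}} − Y_{0,M_{0,0}}]/E[M_{0,1} − M_{0,0}], α₀ := E[Y_{1,M_{1,Z}}] − α₁·E[M_{1,Z}], and β₀ := E[Y_{0,M_{0,Z}}] − β₁·E[M_{0,Z}]. Then α₀ − β₀ + (α₁ − β₁)·E[M_{1,Z}] = E[Y_{1,M_{1,Z}} − Y_{0,M_{1,Z}}]; that is, under constant effects the IV estimand NDE_1^{IV} (with the mediator held at its level under the treated state) equals the natural direct effect NDE_1. -/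
open MeasureTheory ProbabilityTheory

section aux
variable {Ω : Type*} [MeasurableSpace Ω] {P : Measure Ω} [IsProbabilityMeasure P]

lemma intBR {N : Ω → Bool} (hN : Measurable N) : Integrable (fun ω => bR (N ω)) P := by
  refine Integrable.mono' (integrable_const 1) (((Measurable.of_discrete (f := bR)).comp hN).aestronglyMeasurable) ?_
  filter_upwards with ω
  simp only [bR]; split <;> simp

lemma measComb {Z : Ω → Bool} {M : Bool → Ω → Bool} (hZ : Measurable Z)
    (hM : ∀ z, Measurable (M z)) : Measurable (fun ω => M (Z ω) ω) := by
  have : (fun ω => M (Z ω) ω) = fun ω => if Z ω = true then M true ω else M false ω := by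
    funext ω; cases h : Z ω <;> simp
  rw [this]
  exact Measurable.ite (hZ (MeasurableSet.singleton true)) (hM true) (hM false)

lemma intComb {Y : Bool → Ω → ℝ} {N : Ω → Bool} (hN : Measurable N)
    (hY : ∀ m, Integrable (Y m) P) : Integrable (fun ω => Y (N ω) ω) P := by
  have hA : MeasurableSet {ω | N ω = true} := hN (MeasurableSet.singleton true)
  have : (fun ω => Y (N ω) ω)
      = Set.indicator {ω | N ω = true} (Y true) + Set.indicator {ω | N ω = true}ᶜ (Y false) := by
    funext ω
    by_cases h : N ω = true <;> simp [Set.indicator, h]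
  rw [this]
  exact ((hY true).indicator hA).add ((hY false).indicator hA.compl)
end aux

/-- under a constant control-arm mediator effect `Y_{0,1} - Y_{0,0} = c₀` a.s.
(and nonzero first stages), the IV estimand `NDE_1^{IV} = α₀ - β₀ + (α₁ - β₁)·E[M_{1,Z}]`
equals the natural direct effect `NDE_1 = E[Y_{1,M_{1,Z}} - Y_{0,M_{1,Z}}]`. -/
theorem stmt_15 {Ω : Type*} [MeasurableSpace Ω] (P : Measure Ω) [IsProbabilityMeasure P]
    (Z : Ω → Bool) (M : Bool → Bool → Ω → Bool) (Ypo : Bool → Bool → Ω → ℝ)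
    (hZ : Measurable Z) (hM : ∀ d z, Measurable (M d z))
    (hY : ∀ d m, Integrable (Ypo d m) P)
    (hden1 : (∫ ω, (bR (M true true ω) - bR (M true false ω)) ∂P) ≠ 0)
    (hden0 : (∫ ω, (bR (M false true ω) - bR (M false false ω)) ∂P) ≠ 0)
    (c₀ : ℝ) (hc₀ : ∀ᵐ ω ∂P, Ypo false true ω - Ypo false false ω = c₀)
    (α₁ β₁ α₀ β₀ : ℝ)
    (hα₁ : α₁ = (∫ ω, (Ypo true (M true true ω) ω - Ypo true (M true false ω) ω) ∂P)
        / (∫ ω, (bR (M true true ω) - bR (M true false ω)) ∂P))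
    (hβ₁ : β₁ = (∫ ω, (Ypo false (M false true ω) ω - Ypo false (M false false ω) ω) ∂P)
        / (∫ ω, (bR (M false true ω) - bR (M false false ω)) ∂P))
    (hα₀ : α₀ = (∫ ω, Ypo true (M true (Z ω) ω) ω ∂P)
        - α₁ * ∫ ω, bR (M true (Z ω) ω) ∂P)
    (hβ₀ : β₀ = (∫ ω, Ypo false (M false (Z ω) ω) ω ∂P)
        - β₁ * ∫ ω, bR (M false (Z ω) ω) ∂P) :
    α₀ - β₀ + (α₁ - β₁) * ∫ ω, bR (M true (Z ω) ω) ∂P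
      = ∫ ω, (Ypo true (M true (Z ω) ω) ω - Ypo false (M true (Z ω) ω) ω) ∂P := by
  -- pointwise structure: Ypo false m = Ypo false false + c₀ * bR m a.s.
  have hpt : ∀ᵐ ω ∂P, ∀ m, Ypo false m ω = Ypo false false ω + c₀ * bR m := by
    filter_upwards [hc₀] with ω h m
    cases m <;> simp [bR] <;> linarith
  -- β₁ = c₀
  have hβc : β₁ = c₀ := by
    have hnum : (∫ ω, (Ypo false (M false true ω) ω - Ypo false (M false false ω) ω) ∂P)
        = c₀ * ∫ ω, (bR (M false true ω) - bR (M false false ω)) ∂P := by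
      rw [← integral_const_mul]
      refine integral_congr_ae ?_
      filter_upwards [hpt] with ω h
      rw [h (M false true ω), h (M false false ω)]; ring
    rw [hβ₁, hnum, mul_div_assoc, div_self hden0, mul_one]
  -- measurability of combined mediators
  have hN0 : Measurable (fun ω => M false (Z ω) ω) := measComb hZ (hM false)
  have hN1 : Measurable (fun ω => M true (Z ω) ω) := measComb hZ (hM true)
  -- decomposition lemma for control outcomes at any measurable bool index
  have hdec : ∀ (N : Ω → Bool), Measurable N →
      (∫ ω, Ypo false (N ω) ω ∂P)
        = (∫ ω, Ypo false false ω ∂P) + c₀ * ∫ ω, bR (N ω) ∂P := by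
    intro N hN
    have h1 : (∫ ω, Ypo false (N ω) ω ∂P)
        = ∫ ω, (Ypo false false ω + c₀ * bR (N ω)) ∂P := by
      refine integral_congr_ae ?_
      filter_upwards [hpt] with ω h
      exact h (N ω)
    rw [h1, integral_add (hY false false) ((intBR hN).const_mul c₀), integral_const_mul]
  have hd0 := hdec _ hN0
  have hd1 := hdec _ hN1
  -- RHS split
  have hrhs : (∫ ω, (Ypo true (M true (Z ω) ω) ω - Ypo false (M true (Z ω) ω) ω) ∂P)
      = (∫ ω, Ypo true (M true (Z ω) ω) ω ∂P) - ∫ ω, Ypo false (M true (Z ω) ω) ω ∂P :=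
    integral_sub (intComb hN1 (hY true)) (intComb hN1 (hY false))
  rw [hrhs, hd1, hα₀, hβ₀, hβc, hd0]
  ring
end

section
/- Let Z be a {0,1}-valued random variable and suppose the family consisting of the {0,1}-valued potential mediators (M_{d,z})_{d,z∈{0,1}} and the integrable potential outcomes Y_{0,0}, Y_{0,1} is independent of Z. If P(M_{1,z} ≥ M_{0,z}) = 1 for z = 0,1 (weak monotonicity of the mediator in the treatment), then E[Y_{0,M_{1,Z}} − Y_{0,M_{0,Z}}] = Σ_{z∈{0,1}} E[(Y_{0,1} − Y_{0,0})·1{M_{1,z} > M_{0,z}}]·P(Z=z). -/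
open MeasureTheory ProbabilityTheory

section CountableIndex

variable {Ω α β : Type*} {mΩ : MeasurableSpace Ω} [MeasurableSpace α] [Countable α]
  [MeasurableSingletonClass α]

theorem measurable_rel_of_countable (r : α → α → Prop) {X Y : Ω → α} (hX : Measurable X)
    (hY : Measurable Y) : Measurable fun ω => r (X ω) (Y ω) :=
  (Measurable.of_discrete (f := fun p : α × α => r p.1 p.2)).comp (hX.prodMk hY)

theorem measurable_apply_comp [MeasurableSpace β] {N : Ω → α} (hN : Measurable N)
    {f : α → Ω → β} (hf : ∀ a, Measurable (f a)) : Measurable fun ω => f (N ω) ω :=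
  (measurable_from_prod_countable_left (f := fun p : Ω × α => f p.2 p.1) hf).comp
    (measurable_id.prodMk hN)

end CountableIndex

section FiniteIndex

variable {Ω α E : Type*} {mΩ : MeasurableSpace Ω} [Fintype α]

theorem apply_comp_eq_sum_indicator [AddCommMonoid E] (N : Ω → α) (f : α → Ω → E) :
    (fun ω => f (N ω) ω) = fun ω => ∑ a, (N ⁻¹' {a}).indicator (f a) ω := by
  funext ω
  symm
  refine (Finset.sum_eq_single_of_mem (N ω) (Finset.mem_univ _) fun a _ ha => ?_).trans ?_
  · exact Set.indicator_of_notMem (s := N ⁻¹' {a}) (Ne.symm ha) _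
  · exact Set.indicator_of_mem (s := N ⁻¹' {N ω}) rfl _

variable [MeasurableSpace α] [MeasurableSingletonClass α] [NormedAddCommGroup E] {μ : Measure Ω}

theorem integrable_apply_comp {N : Ω → α} (hN : Measurable N) {f : α → Ω → E}
    (hf : ∀ a, Integrable (f a) μ) : Integrable (fun ω => f (N ω) ω) μ := by
  rw [apply_comp_eq_sum_indicator]
  exact integrable_finsetSum _ fun a _ => (hf a).indicator (hN (measurableSet_singleton a))

theorem integral_apply_comp_eq_sum_setIntegral [NormedSpace ℝ E] {N : Ω → α}
    (hN : Measurable N) {f : α → Ω → E} (hf : ∀ a, Integrable (f a) μ) :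
    ∫ ω, f (N ω) ω ∂μ = ∑ a, ∫ ω in N ⁻¹' {a}, f a ω ∂μ := by
  rw [apply_comp_eq_sum_indicator, integral_finsetSum _ fun a _ =>
    (hf a).indicator (hN (measurableSet_singleton a))]
  exact Finset.sum_congr rfl fun a _ => integral_indicator (hN (measurableSet_singleton a))

end FiniteIndex

theorem ProbabilityTheory.Indep.setIntegral_preimage_eq_mul {Ω α : Type*}
    {m mΩ : MeasurableSpace Ω} [MeasurableSpace α] {P : Measure Ω} {Z : Ω → α}
    {W : Ω → ℝ}
    (h : Indep m (MeasurableSpace.comap Z inferInstance) P) (hZ : Measurable Z)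
    (hW : Measurable[m] W) (hW' : AEMeasurable W P) {s : Set α} (hs : MeasurableSet s) :
    ∫ ω in Z ⁻¹' s, W ω ∂P = P.real (Z ⁻¹' s) * ∫ ω, W ω ∂P :=
  (indep_of_indep_of_le_left h hW.comap_le).symm.setIntegral_eq_mul hZ.comap_le hW'
    ⟨s, hs, rfl⟩ aestronglyMeasurable_id

theorem Bool.sub_apply_eq_ite_of_le {α : Type*} [AddGroup α] (Y : Bool → α) {a b : Bool}
    (hab : a ≤ b) : Y b - Y a = if a < b then Y true - Y false else 0 := by
  revert hab; cases a <;> cases b <;> simp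

theorem integral_sub_apply_eq_setIntegral_of_ae_le {Ω : Type*} [MeasurableSpace Ω]
    {μ : Measure Ω} {N₀ N₁ : Ω → Bool} (hN₀ : Measurable N₀) (hN₁ : Measurable N₁)
    (hle : ∀ᵐ ω ∂μ, N₀ ω ≤ N₁ ω) (Y : Bool → Ω → ℝ) :
    ∫ ω, (Y (N₁ ω) ω - Y (N₀ ω) ω) ∂μ
      = ∫ ω in {ω | N₀ ω < N₁ ω}, (Y true ω - Y false ω) ∂μ := by
  have hC := measurableSet_setOfPred.2 (measurable_rel_of_countable (· < ·) hN₀ hN₁)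
  rw [← integral_indicator hC]
  refine integral_congr_ae (hle.mono fun ω hω => ?_)
  simpa [Set.indicator_apply] using Bool.sub_apply_eq_ite_of_le (Y · ω) hω

/-- under independence of the potential variables from `Z` and weak
monotonicity of the mediator in the treatment (`P(M_{1,z} ≥ M_{0,z}) = 1`), the natural
indirect effect is a `P(Z=z)`-weighted sum of complier average mediator effects. -/
theorem stmt_16 {Ω : Type*} [MeasurableSpace Ω] (P : Measure Ω) [IsProbabilityMeasure P]
    (Z : Ω → Bool) (M : Bool → Bool → Ω → Bool) (Y0 : Bool → Ω → ℝ)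
    (hZ : Measurable Z) (hM : ∀ d z, Measurable (M d z))
    (hY : ∀ m, Integrable (Y0 m) P)
    (hIndep : Indep
      ((⨆ (d : Bool) (z : Bool), MeasurableSpace.comap (M d z) inferInstance)
        ⊔ (⨆ (m : Bool), MeasurableSpace.comap (Y0 m) inferInstance))
      (MeasurableSpace.comap Z inferInstance) P)
    (hmono : ∀ z : Bool, P {ω | M false z ω ≤ M true z ω} = 1) :
    ∫ ω, (Y0 (M true (Z ω) ω) ω - Y0 (M false (Z ω) ω) ω) ∂P
      = ∑ z : Bool,
          (∫ ω in {ω | M false z ω < M true z ω}, (Y0 true ω - Y0 false ω) ∂P)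
            * (P {ω | Z ω = z}).toReal := by
  set W : Bool → Ω → ℝ := fun z ω => Y0 (M true z ω) ω - Y0 (M false z ω) ω
  have hW_int (z : Bool) : Integrable (W z) P :=
    (integrable_apply_comp (hM true z) hY).sub (integrable_apply_comp (hM false z) hY)
  have hW_split (z : Bool) :
      ∫ ω in Z ⁻¹' {z}, W z ω ∂P = P.real (Z ⁻¹' {z}) * ∫ ω, W z ω ∂P := by
    refine hIndep.setIntegral_preimage_eq_mul hZ ?_ (hW_int z).aemeasurable
      (measurableSet_singleton z)
    refine .sub (measurable_apply_comp ?_ fun m => ?_)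
      (measurable_apply_comp ?_ fun m => ?_) <;> refine measurable_iff_comap_le.2 ?_
    all_goals first
      | exact le_sup_of_le_left (le_iSup₂_of_le _ z le_rfl)
      | exact le_sup_of_le_right (le_iSup_of_le m le_rfl)
  have hle (z : Bool) : ∀ᵐ ω ∂P, M false z ω ≤ M true z ω :=
    (ae_iff_prob_eq_one <| measurable_rel_of_countable (· ≤ ·) (hM false z) (hM true z)).2
      (hmono z)
  calc ∫ ω, W (Z ω) ω ∂P = ∑ z, ∫ ω in Z ⁻¹' {z}, W z ω ∂P :=
        integral_apply_comp_eq_sum_setIntegral hZ hW_int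
    _ = ∑ z, P.real (Z ⁻¹' {z}) * ∫ ω, W z ω ∂P :=
        Finset.sum_congr rfl fun z _ => hW_split z
    _ = _ := Finset.sum_congr rfl fun z _ => by
        rw [mul_comm,
          integral_sub_apply_eq_setIntegral_of_ae_le (hM false z) (hM true z) (hle z)]
        rfl
end

section
/- Let M_{0,1}, M_{0,0} be {0,1}-valued random variables with P(M_{0,1} > M_{0,0}) = 2/3 and P(M_{0,1} < M_{0,0}) = 1/3, let Y_{0,0}, Y_{0,1} be integrable random variables, and let a ∈ ℝ satisfy E[Y_{0,1} − Y_{0,0} | M_{0,1} > M_{0,0}] = a and E[Y_{0,1} − Y_{0,0} | M_{0,1} < M_{0,0}] = 2a. Then E[M_{0,1} − M_{0,0}] = 1/3 and E[Y_{0,M_{0,1}} − Y_{0,M_{0,0}}] = 0, so the Wald ratio E[Y_{0,M_{0,1}} − Y_{0,M_{0,0}}] / E[M_{0,1} − M_{0,0}] equals 0 even though both subgroup average effects equal a and 2a respectively. -/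
open MeasureTheory ProbabilityTheory

/-!
For `{0,1}`-valued `M₁, M₀`, the difference `Y_{M₁} - Y_{M₀}` vanishes unless `M₁ ≠ M₀`: it is
`Y₁ - Y₀` on the compliers `{M₀ < M₁}` and `-(Y₁ - Y₀)` on the defiers `{M₁ < M₀}`. Hence
`E[Y_{M₁} - Y_{M₀}] = a · 2/3 - 2a · 1/3 = 0`, while `E[M₁ - M₀] = 2/3 - 1/3`.
-/

theorem measurableSet_bool_lt {Ω : Type*} [MeasurableSpace Ω] {M₁ M₀ : Ω → Bool}
    (hM₁ : Measurable M₁) (hM₀ : Measurable M₀) : MeasurableSet {ω | M₀ ω < M₁ ω} :=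
  (hM₀.prodMk hM₁) (MeasurableSet.of_discrete (s := {p : Bool × Bool | p.1 < p.2}))

theorem sub_bool_eq_indicator_sub_indicator {Ω G : Type*} [AddCommGroup G]
    (M₁ M₀ : Ω → Bool) (f : Bool → Ω → G) :
    (fun ω => f (M₁ ω) ω - f (M₀ ω) ω) = fun ω =>
      {ω | M₀ ω < M₁ ω}.indicator (fun ω => f true ω - f false ω) ω
        - {ω | M₁ ω < M₀ ω}.indicator (fun ω => f true ω - f false ω) ω := by
  funext ω
  cases h₁ : M₁ ω <;> cases h₀ : M₀ ω <;> simp [Set.indicator, h₁, h₀, Bool.lt_iff]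

theorem integral_sub_bool_eq_setIntegral_sub_setIntegral {Ω : Type*} [MeasurableSpace Ω]
    {P : Measure Ω} {M₁ M₀ : Ω → Bool} (hM₁ : Measurable M₁) (hM₀ : Measurable M₀)
    {f : Bool → Ω → ℝ} (hf : ∀ m, Integrable (f m) P) :
    ∫ ω, (f (M₁ ω) ω - f (M₀ ω) ω) ∂P =
      (∫ ω in {ω | M₀ ω < M₁ ω}, (f true ω - f false ω) ∂P)
        - ∫ ω in {ω | M₁ ω < M₀ ω}, (f true ω - f false ω) ∂P := by
  have hA := measurableSet_bool_lt hM₁ hM₀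
  have hB := measurableSet_bool_lt hM₀ hM₁
  have hW : Integrable (fun ω => f true ω - f false ω) P := (hf true).sub (hf false)
  rw [sub_bool_eq_indicator_sub_indicator, integral_sub (hW.indicator hA) (hW.indicator hB),
    integral_indicator hA, integral_indicator hB]

theorem setIntegral_eq_condMean_mul {Ω : Type*} [MeasurableSpace Ω] {P : Measure Ω}
    {W : Ω → ℝ} {A : Set Ω} (hA : (P A).toReal ≠ 0) :
    ∫ ω in A, W ω ∂P = condMean P W A * (P A).toReal :=
  (div_mul_cancel₀ _ hA).symm

/-- numerical example — if `P(M_{0,1} > M_{0,0}) = 2/3`,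
`P(M_{0,1} < M_{0,0}) = 1/3`, and the subgroup average effects are `a` and `2a`, then
`E[M_{0,1} - M_{0,0}] = 1/3` and `E[Y_{0,M_{0,1}} - Y_{0,M_{0,0}}] = 0`, so the Wald ratio
is `0` even though the subgroup effects are `a` and `2a`. -/
theorem stmt_19 {Ω : Type*} [MeasurableSpace Ω] (P : Measure Ω) [IsProbabilityMeasure P]
    (M01 M00 : Ω → Bool) (Y0 : Bool → Ω → ℝ)
    (hM01 : Measurable M01) (hM00 : Measurable M00)
    (hY : ∀ m, Integrable (Y0 m) P)
    (a : ℝ)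
    (hgt : (P {ω | M00 ω < M01 ω}).toReal = 2/3)
    (hlt : (P {ω | M01 ω < M00 ω}).toReal = 1/3)
    (ha : condMean P (fun ω => Y0 true ω - Y0 false ω) {ω | M00 ω < M01 ω} = a)
    (h2a : condMean P (fun ω => Y0 true ω - Y0 false ω) {ω | M01 ω < M00 ω} = 2 * a) :
    (∫ ω, (bR (M01 ω) - bR (M00 ω)) ∂P) = 1/3
    ∧ (∫ ω, (Y0 (M01 ω) ω - Y0 (M00 ω) ω) ∂P) = 0
    ∧ (∫ ω, (Y0 (M01 ω) ω - Y0 (M00 ω) ω) ∂P)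
        / (∫ ω, (bR (M01 ω) - bR (M00 ω)) ∂P) = 0 := by
  have hM_mean : ∫ ω, (bR (M01 ω) - bR (M00 ω)) ∂P = 1/3 := by
    rw [integral_sub_bool_eq_setIntegral_sub_setIntegral (f := fun b _ => bR b) hM01 hM00
      fun _ => integrable_const _]
    simp only [bR, setIntegral_const, measureReal_def, hgt, hlt]
    norm_num
  have hY_mean : ∫ ω, (Y0 (M01 ω) ω - Y0 (M00 ω) ω) ∂P = 0 := by
    rw [integral_sub_bool_eq_setIntegral_sub_setIntegral hM01 hM00 hY,
      setIntegral_eq_condMean_mul (by rw [hgt]; norm_num),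
      setIntegral_eq_condMean_mul (by rw [hlt]; norm_num), ha, h2a, hgt, hlt]
    ring
  exact ⟨hM_mean, hY_mean, by rw [hY_mean, zero_div]⟩
end
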